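/- arXiv:2408.03527 — 2 statements merged into one kernel-verified Lean document; each statement's English description precedes it below -/
import Mathlib

section
/- Let c ∈ ℝ^m be a circuit vector with support C = {i : c_i ≠ 0}, and let a, b ∈ ℝ^m satisfy ⟨c,a⟩ < 0 and ⟨c,b⟩ ≥ 0. Then there exists x ∈ ℝ^n such that sign(⟨u_i,x⟩ − a_i) = sign(c_i) for every i ∈ C, and there exists no x ∈ ℝ^n such that sign(⟨u_i,x⟩ − b_i) = sign(c_i) for every i ∈ C. -/
open RealInnerProductSpace

noncomputable section

/-- `ℝ^n` with the Euclidean inner product. -/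
abbrev Euc (n : ℕ) := EuclideanSpace ℝ (Fin n)

/-- Standard scalar product on `ℝ^m` (as tuples). -/
def dotm {m : ℕ} (c a : Fin m → ℝ) : ℝ := ∑ i, c i * a i

/-- `C` is a circuit: the family `{u i : i ∈ C}` is linearly dependent but every proper
subfamily is linearly independent. -/
def IsCircuit {n m : ℕ} (u : Fin m → Euc n) (C : Set (Fin m)) : Prop :=
  ¬ LinearIndependent ℝ (fun i : C => u i) ∧
    ∀ D : Set (Fin m), D ⊂ C → LinearIndependent ℝ (fun i : D => u i)

/-- `c` is a circuit vector: `∑ i, c i • u i = 0` and the support of `c` is a circuit. -/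
def IsCircuitVector {n m : ℕ} (u : Fin m → Euc n) (c : Fin m → ℝ) : Prop :=
  (∑ i, c i • u i) = 0 ∧ IsCircuit u {i | c i ≠ 0}

/-- `a` and `b` lie in the same open face of the derived arrangement `δA_o`:
for every circuit vector `c`, `⟨c,a⟩` and `⟨c,b⟩` have the same sign. -/
def SameOpenFace {n m : ℕ} (u : Fin m → Euc n) (a b : Fin m → ℝ) : Prop :=
  ∀ c : Fin m → ℝ, IsCircuitVector u c →
    SignType.sign (dotm c a) = SignType.sign (dotm c b)

/-- `I, J, K` is a partition of `{1,…,m}` into pairwise disjoint (possibly empty) sets. -/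
def IsTripartition {m : ℕ} (I J K : Set (Fin m)) : Prop :=
  I ∪ J ∪ K = Set.univ ∧ Disjoint I J ∧ Disjoint I K ∧ Disjoint J K

/-- The convex polyhedron `P(a,I,J,K)`. -/
def poly {n m : ℕ} (u : Fin m → Euc n) (a : Fin m → ℝ) (I J K : Set (Fin m)) :
    Set (Euc n) :=
  {x | (∀ i ∈ I, ⟪u i, x⟫ = a i) ∧ (∀ j ∈ J, ⟪u j, x⟫ ≤ a j) ∧ (∀ k ∈ K, a k ≤ ⟪u k, x⟫)}

/-- The normal cone of `P` at `x`. -/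
def normalCone {n : ℕ} (P : Set (Euc n)) (x : Euc n) : Set (Euc n) :=
  {v | ∀ y ∈ P, ⟪v, y⟫ ≤ ⟪v, x⟫}

/-- The normal fan of `P`: the family of normal cones at points of `P`. -/
def normalFan {n : ℕ} (P : Set (Euc n)) : Set (Set (Euc n)) :=
  {N | ∃ x ∈ P, N = normalCone P x}

/-- A face of a convex polyhedron: the empty set or an exposed face. -/
def IsFace {n : ℕ} (P F : Set (Euc n)) : Prop :=
  F = ∅ ∨ ∃ v : Euc n, F = {x ∈ P | ∀ y ∈ P, ⟪v, y⟫ ≤ ⟪v, x⟫}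

/-- The set of sign vectors of the parallel translation `A_a`. -/
def signSet {n m : ℕ} (u : Fin m → Euc n) (a : Fin m → ℝ) : Set (Fin m → SignType) :=
  {s | ∃ x : Euc n, ∀ i, s i = SignType.sign (⟪u i, x⟫ - a i)}

/-!
Since `∑ cᵢ uᵢ = 0`, every `x` satisfies `∑ cᵢ ⟪uᵢ, x⟫ = 0`. Hence if `⟪uᵢ, x⟫ - bᵢ` had the sign
of `cᵢ` on the support, `∑ cᵢ (⟪uᵢ, x⟫ - bᵢ) = -⟨c, b⟩` would be positive. Conversely, removing one
index `j` from the circuit leaves an independent family, so `⟪uᵢ, x⟫` can be prescribed freely for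
`i ≠ j` in the support, and the relation then forces the `j`-th value: any target `g` with
`⟨c, g⟩ = 0` is attained on the support. Taking `g = a + t c` with `t = -⟨c, a⟩ / ⟨c, c⟩ > 0`
gives `⟪uᵢ, x⟫ - aᵢ = t cᵢ`.
-/

section InnerProductSpace

variable {E : Type*} [NormedAddCommGroup E] [InnerProductSpace ℝ E]

/-- Riesz representation on the (finite-dimensional) span of the family. -/
theorem LinearIndependent.exists_inner_eq {ι : Type*} [Finite ι] {v : ι → E}
    (hv : LinearIndependent ℝ v) (f : ι → ℝ) : ∃ x : E, ∀ i, ⟪v i, x⟫ = f i := by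
  let W := Submodule.span ℝ (Set.range v)
  have : FiniteDimensional ℝ W := .span_of_finite ℝ (Set.finite_range v)
  let b := Module.Basis.span hv
  let φ : StrongDual ℝ W := LinearMap.toContinuousLinearMap (b.constr ℝ f)
  refine ⟨(InnerProductSpace.toDual ℝ W).symm φ, fun i => ?_⟩
  rw [← Module.Basis.coe_span_apply hv i, ← Submodule.coe_inner, real_inner_comm,
    InnerProductSpace.toDual_symm_apply]
  exact b.constr_basis ℝ f i

end InnerProductSpace

lemma dotm_add_smul {m : ℕ} (c a g : Fin m → ℝ) (t : ℝ) :
    dotm c (a + t • g) = dotm c a + t * dotm c g := by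
  simp only [dotm, Pi.add_apply, Pi.smul_apply, smul_eq_mul, Finset.mul_sum,
    ← Finset.sum_add_distrib]
  exact Finset.sum_congr rfl fun i _ => by ring

lemma dotm_self_pos {m : ℕ} {c : Fin m → ℝ} {j : Fin m} (hj : c j ≠ 0) : 0 < dotm c c :=
  Finset.sum_pos' (fun i _ => mul_self_nonneg (c i)) ⟨j, Finset.mem_univ j, mul_self_pos.2 hj⟩

lemma mul_pos_of_sign_eq {c y : ℝ} (hc : c ≠ 0) (h : SignType.sign y = SignType.sign c) :
    0 < c * y := by
  rcases hc.lt_or_gt with hc | hc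
  · exact mul_pos_of_neg_of_neg hc (sign_eq_neg_one_iff.1 (h.trans (sign_neg hc)))
  · exact mul_pos hc (sign_eq_one_iff.1 (h.trans (sign_pos hc)))

namespace IsCircuitVector

variable {n m : ℕ} {u : Fin m → Euc n} {c : Fin m → ℝ}

lemma exists_ne_zero (hc : IsCircuitVector u c) : ∃ j, c j ≠ 0 := by
  by_contra! h
  have : IsEmpty {i | c i ≠ 0} := ⟨fun i => i.2 (h i)⟩
  exact hc.2.1 linearIndependent_empty_type

lemma sum_mul_inner_eq_zero (hc : IsCircuitVector u c) (x : Euc n) :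
    ∑ i, c i * ⟪u i, x⟫ = 0 := by
  simpa only [sum_inner, real_inner_smul_left, inner_zero_left] using
    congrArg (⟪·, x⟫) hc.1

lemma exists_inner_eq_of_dotm_eq_zero (hc : IsCircuitVector u c) {g : Fin m → ℝ}
    (hg : dotm c g = 0) : ∃ x : Euc n, ∀ i, c i ≠ 0 → ⟪u i, x⟫ = g i := by
  obtain ⟨j, hj⟩ := hc.exists_ne_zero
  have hD : {i | c i ≠ 0 ∧ i ≠ j} ⊂ {i | c i ≠ 0} :=
    ⟨fun i hi => hi.1, fun hsub => (hsub (show j ∈ {i | c i ≠ 0} from hj)).2 rfl⟩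
  have : Finite {i | c i ≠ 0 ∧ i ≠ j} := Subtype.finite
  obtain ⟨x, hx⟩ := (hc.2.2 _ hD).exists_inner_eq fun i => g i
  have hxj : c j * (⟪u j, x⟫ - g j) = 0 := by
    have hsum : ∑ i, c i * (⟪u i, x⟫ - g i) = 0 := by
      simp only [mul_sub, Finset.sum_sub_distrib, hc.sum_mul_inner_eq_zero x]
      simpa [dotm] using hg
    rwa [Finset.sum_eq_single j (fun i _ hij => ?_) (by simp)] at hsum
    by_cases hi : c i = 0
    · rw [hi, zero_mul]
    · rw [hx ⟨i, hi, hij⟩, sub_self, mul_zero]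
  refine ⟨x, fun i hi => ?_⟩
  by_cases hij : i = j
  · subst hij
    exact sub_eq_zero.1 ((mul_eq_zero.1 hxj).resolve_left hi)
  · exact hx ⟨i, hi, hij⟩

lemma exists_sign_eq (hc : IsCircuitVector u c) {a : Fin m → ℝ} (ha : dotm c a < 0) :
    ∃ x : Euc n, ∀ i, c i ≠ 0 → SignType.sign (⟪u i, x⟫ - a i) = SignType.sign (c i) := by
  obtain ⟨j, hj⟩ := hc.exists_ne_zero
  have hcc := dotm_self_pos hj
  set t := -dotm c a / dotm c c
  have ht : 0 < t := div_pos (neg_pos.2 ha) hcc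
  have hg : dotm c (a + t • c) = 0 := by
    rw [dotm_add_smul, div_mul_cancel₀ _ hcc.ne', add_neg_cancel]
  obtain ⟨x, hx⟩ := hc.exists_inner_eq_of_dotm_eq_zero hg
  refine ⟨x, fun i hi => ?_⟩
  rw [hx i hi, Pi.add_apply, Pi.smul_apply, smul_eq_mul, add_sub_cancel_left, sign_mul,
    sign_pos ht, one_mul]

lemma not_exists_sign_eq (hc : IsCircuitVector u c) {b : Fin m → ℝ} (hb : 0 ≤ dotm c b) :
    ¬ ∃ x : Euc n, ∀ i, c i ≠ 0 → SignType.sign (⟪u i, x⟫ - b i) = SignType.sign (c i) := by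
  rintro ⟨x, hx⟩
  obtain ⟨j, hj⟩ := hc.exists_ne_zero
  have hterm : ∀ i, 0 ≤ c i * (⟪u i, x⟫ - b i) := fun i => by
    by_cases hi : c i = 0
    · rw [hi, zero_mul]
    · exact (mul_pos_of_sign_eq hi (hx i hi)).le
  have hpos : 0 < ∑ i, c i * (⟪u i, x⟫ - b i) :=
    Finset.sum_pos' (fun i _ => hterm i) ⟨j, Finset.mem_univ j, mul_pos_of_sign_eq hj (hx j hj)⟩
  have hsum : ∑ i, c i * (⟪u i, x⟫ - b i) = -dotm c b := by
    simp only [mul_sub, Finset.sum_sub_distrib, hc.sum_mul_inner_eq_zero x, dotm, zero_sub]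
  linarith

end IsCircuitVector

theorem separate_cells_general {n m : ℕ}
    (u : Fin m → Euc n)
    (c : Fin m → ℝ) (hc : IsCircuitVector u c)
    (a b : Fin m → ℝ) (ha : dotm c a < 0) (hb : 0 ≤ dotm c b) :
    (∃ x : Euc n, ∀ i, c i ≠ 0 →
        SignType.sign (⟪u i, x⟫ - a i) = SignType.sign (c i)) ∧
      ¬ ∃ x : Euc n, ∀ i, c i ≠ 0 →
          SignType.sign (⟪u i, x⟫ - b i) = SignType.sign (c i) :=
  ⟨hc.exists_sign_eq ha, hc.not_exists_sign_eq hb⟩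

theorem separate_cells {n m : ℕ} (hn : 1 ≤ n) (hm : 1 ≤ m)
    (u : Fin m → Euc n) (hu : ∀ i, u i ≠ 0)
    (c : Fin m → ℝ) (hc : IsCircuitVector u c)
    (a b : Fin m → ℝ) (ha : dotm c a < 0) (hb : 0 ≤ dotm c b) :
    (∃ x : Euc n, ∀ i, c i ≠ 0 →
        SignType.sign (⟪u i, x⟫ - a i) = SignType.sign (c i)) ∧
      ¬ ∃ x : Euc n, ∀ i, c i ≠ 0 →
          SignType.sign (⟪u i, x⟫ - b i) = SignType.sign (c i) :=
  separate_cells_general u c hc a b ha hb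
end
end

section
/- For S ⊆ ℝ^m define Sign(S) := ⋃_{a ∈ S} sign(A_a) ⊆ {+,0,−}^m, and for T ⊆ {+,0,−}^m define Face(T) := {a ∈ ℝ^m : T ⊆ sign(A_a)}. Then for every nonempty subset S ⊆ ℝ^m, Face(Sign(S)) = S holds if and only if S is an open face of the derived arrangement δA_o, i.e. there exists a ∈ ℝ^m such that S = {b ∈ ℝ^m : for every circuit vector c, ⟨c,b⟩ and ⟨c,a⟩ have the same sign (both zero, both positive, or both negative)}. -/
open RealInnerProductSpace

noncomputable section

/-- The sign operator: the union of the sign sets of `A_a` over `a ∈ S`. -/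
def SignOp {n m : ℕ} (u : Fin m → Euc n) (S : Set (Fin m → ℝ)) :
    Set (Fin m → SignType) :=
  ⋃ a ∈ S, signSet u a

/-- The face operator. -/
def FaceOp {n m : ℕ} (u : Fin m → Euc n) (T : Set (Fin m → SignType)) :
    Set (Fin m → ℝ) :=
  {a | T ⊆ signSet u a}

/-!
The theorem reduces to `signSet u b ⊆ signSet u a ↔ SameOpenFace u b a`, after which
`FaceOp u (SignOp u S)` is the set of points sharing the open face of every point of `S`.

For `→`: given a circuit vector `c`, the equations `⟪u i, y⟫ = β i` on the circuit are solvable as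
soon as `⟨c, β⟩ = 0`, so some point of `A_b` has sign vector `-sign ⟨c, b⟩ • sign c` on the
circuit, and realizing it in `A_a` forces `sign ⟨c, a⟩ = sign ⟨c, b⟩`.

For `←`: if a sign vector `sign (⟪u i, x⟫ - b i)` of `A_b` is not realized in `A_a`, Motzkin's
transposition theorem gives a linear dependence `d` of the `u i`, sign-compatible with it, with
`⟨d, a⟩` of the wrong sign; but `d` is a nonnegative combination of circuit vectors conformal to it,
on which `a` and `b` have the same signs.
-/

theorem sign_eq_sign_of_mul_pos {x y : ℝ} (h : 0 < x * y) : SignType.sign x = SignType.sign y := by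
  rcases lt_or_gt_of_ne (left_ne_zero_of_mul h.ne') with hx | hx
  · rw [sign_neg hx, sign_neg (by nlinarith)]
  · rw [sign_pos hx, sign_pos (by nlinarith)]

theorem sign_sum_mul_eq {ι : Type*} [Fintype ι] {c z : ι → ℝ} (hc : c ≠ 0) {t : SignType}
    (h : ∀ i, c i ≠ 0 → SignType.sign (c i * z i) = t) : SignType.sign (∑ i, c i * z i) = t := by
  classical
  rw [← Finset.sum_filter_of_ne (p := fun i => c i ≠ 0) fun i _ hi => left_ne_zero_of_mul hi]
  obtain ⟨j, hj⟩ := Function.ne_iff.1 hc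
  exact sign_sum ⟨j, by simpa using hj⟩ t (by simpa using h)

theorem sign_add_eq_sign_add {x x' y y' : ℝ} (hy : y ≤ 0) (hy' : y' ≤ 0)
    (h : SignType.sign x = SignType.sign y) (h' : SignType.sign x' = SignType.sign y') :
    SignType.sign (x + x') = SignType.sign (y + y') := by
  rcases hy.lt_or_eq with hy | rfl <;> rcases hy'.lt_or_eq with hy' | rfl
  · rw [sign_neg hy, sign_eq_neg_one_iff] at h
    rw [sign_neg hy', sign_eq_neg_one_iff] at h'
    rw [sign_neg (add_neg h h'), sign_neg (add_neg hy hy')]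
  all_goals simp_all [sign_eq_zero_iff]

theorem nonneg_of_forall_pos_mul_lt {p q : ℝ} (h : ∀ t > 0, t * p < q) : 0 ≤ q := by
  by_contra! hq
  have hp : p < 0 := by linarith [one_mul p ▸ h 1 one_pos]
  have := h (q / p) (div_pos_of_neg_of_neg hq hp)
  rw [div_mul_cancel₀ _ hp.ne] at this
  exact this.false

theorem nonpos_of_forall_pos_add_mul_lt {p q r : ℝ} (h : ∀ t > 0, p + t * q < r) : q ≤ 0 := by
  by_contra! hq
  have hpr : p < r := by linarith [h 1 one_pos]
  have := h ((r - p) / q) (div_pos (sub_pos.2 hpr) hq)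
  rw [div_mul_cancel₀ _ hq.ne'] at this
  linarith

theorem eq_zero_of_forall_le_add_mul {p q r : ℝ} (h : ∀ t : ℝ, r ≤ p + t * q) : q = 0 := by
  by_contra hq
  have := h ((r - p - 1) / q)
  rw [div_mul_cancel₀ _ hq] at this
  linarith

def Conforms {ι : Type*} (x y : ι → ℝ) : Prop := ∀ i, x i ≠ 0 → 0 < x i * y i

namespace Conforms

variable {ι : Type*} {x y z : ι → ℝ}

theorem refl (x : ι → ℝ) : Conforms x x := fun _ hi => mul_self_pos.2 hi

theorem trans (hxy : Conforms x y) (hyz : Conforms y z) : Conforms x z := by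
  intro i hi
  have hxy := hxy i hi
  have hyz := hyz i (right_ne_zero_of_mul (ne_of_gt hxy))
  nlinarith [mul_pos hxy hyz, mul_self_pos.2 (right_ne_zero_of_mul (ne_of_gt hxy))]

theorem support_subset (h : Conforms x y) : Function.support x ⊆ Function.support y :=
  fun i hi => right_ne_zero_of_mul (ne_of_gt (h i hi))

theorem mul_nonneg (h : Conforms x y) (hy : ∀ i, 0 ≤ y i * z i) (i : ι) : 0 ≤ x i * z i := by
  by_cases hx : x i = 0
  · simp [hx]
  · have hxy := h i hx
    nlinarith [hy i, mul_self_nonneg (x i), _root_.mul_nonneg hxy.le (hy i)]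

theorem ncard_support_lt [Finite ι] (h : Conforms x y) {i : ι} (hy : y i ≠ 0) (hx : x i = 0) :
    (Function.support x).ncard < (Function.support y).ncard :=
  Set.ncard_lt_ncard ⟨h.support_subset, fun hsub => hsub hy hx⟩ (Set.toFinite _)

end Conforms

theorem exists_sub_smul_conforms {ι : Type*} [Fintype ι] {e f : ι → ℝ}
    (hsupp : ∀ i, e i = 0 → f i = 0) (hpos : ∃ i, 0 < f i * e i) :
    ∃ t : ℝ, 0 < t ∧ Conforms (e - t • f) e ∧ ∃ i, e i ≠ 0 ∧ (e - t • f) i = 0 := by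
  classical
  obtain ⟨i₀, hi₀, hmin⟩ := Finset.exists_min_image {i | 0 < f i * e i} (fun i => e i / f i)
    (by obtain ⟨i, hi⟩ := hpos; exact ⟨i, by simpa using hi⟩)
  simp only [Finset.mem_filter, Finset.mem_univ, true_and] at hi₀ hmin
  have hf₀ : f i₀ ≠ 0 := left_ne_zero_of_mul (ne_of_gt hi₀)
  have ht : 0 < e i₀ / f i₀ := div_pos_iff.2 (mul_pos_iff.1 (by linarith [mul_comm (f i₀) (e i₀)]))
  refine ⟨e i₀ / f i₀, ht, fun i hi => ?_, i₀, right_ne_zero_of_mul (ne_of_gt hi₀), ?_⟩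
  · have he : e i ≠ 0 := fun he => hi (by simp [he, hsupp i he])
    refine lt_of_le_of_ne ?_ (mul_ne_zero hi he).symm
    simp only [Pi.sub_apply, Pi.smul_apply, smul_eq_mul]
    by_cases hfe : 0 < f i * e i
    · have : e i₀ / f i₀ * (f i * e i) ≤ e i * e i :=
        calc e i₀ / f i₀ * (f i * e i) ≤ e i / f i * (f i * e i) :=
              mul_le_mul_of_nonneg_right (hmin i hfe) hfe.le
          _ = e i * e i := by field_simp [left_ne_zero_of_mul (ne_of_gt hfe)]
      nlinarith
    · nlinarith [mul_self_nonneg (e i)]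
  · simp [div_mul_cancel₀ _ hf₀]

def sameSignCone {ι : Type*} (v : ι → ℝ) : Set (ι → ℝ) := {z | ∀ i, v i ≠ 0 → 0 < v i * z i}

section SameSignCone

variable {ι : Type*} {v : ι → ℝ}

theorem convex_sameSignCone : Convex ℝ (sameSignCone v) := by
  intro z hz z' hz' α β hα hβ hαβ i hi
  simp only [Pi.add_apply, Pi.smul_apply, smul_eq_mul]
  rcases hα.eq_or_lt with rfl | hα
  · simpa [show β = 1 by linarith] using hz' i hi
  · nlinarith [mul_pos hα (hz i hi), mul_nonneg hβ (hz' i hi).le]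

theorem isOpen_sameSignCone [Finite ι] : IsOpen (sameSignCone v) := by
  have : sameSignCone v = ⋂ i ∈ {i | v i ≠ 0}, {z | 0 < v i * z i} := by ext; simp [sameSignCone]
  rw [this]
  exact (Set.toFinite _).isOpen_biInter fun i _ => isOpen_lt continuous_const (by fun_prop)

theorem smul_mem_sameSignCone {t : ℝ} (ht : 0 < t) : t • v ∈ sameSignCone v := fun i hi => by
  simpa [mul_left_comm] using mul_pos ht (mul_self_pos.2 hi)

theorem exists_dotProduct_separating [Fintype ι] {L : Set (ι → ℝ)} (hLc : Convex ℝ L)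
    (hL : Disjoint (sameSignCone v) L) :
    ∃ (w : ι → ℝ) (s : ℝ), 0 ≤ s ∧ (∀ i, w i * v i ≤ 0) ∧ w ⬝ᵥ v < s ∧ ∀ l ∈ L, s ≤ w ⬝ᵥ l := by
  classical
  obtain ⟨f, s, hfO, hfL⟩ :=
    geometric_hahn_banach_open convex_sameSignCone isOpen_sameSignCone hLc hL
  set w : ι → ℝ := fun i => f fun j => if i = j then 1 else 0
  have hf (z : ι → ℝ) : f z = w ⬝ᵥ z := by
    have := (f : (ι → ℝ) →ₗ[ℝ] ℝ).pi_apply_eq_sum_univ z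
    simp only [ContinuousLinearMap.coe_coe] at this
    simp [this, dotProduct, w, mul_comm]
  refine ⟨w, s, nonneg_of_forall_pos_mul_lt (p := w ⬝ᵥ v) fun t ht => ?_, fun i => ?_, ?_, ?_⟩
  · simpa [hf, dotProduct_smul] using hfO _ (smul_mem_sameSignCone ht)
  · refine nonpos_of_forall_pos_add_mul_lt (p := w ⬝ᵥ v) (r := s) fun t ht => ?_
    have hmem : v + t • v i • Pi.single i 1 ∈ sameSignCone v := fun j hj => by
      by_cases hji : j = i
      · subst hji
        have := mul_self_pos.2 hj
        simp only [Pi.add_apply, Pi.smul_apply, Pi.single_eq_same, smul_eq_mul, mul_one]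
        nlinarith
      · simpa [Pi.single_apply, hji] using mul_self_pos.2 hj
    simpa [hf, dotProduct_add, dotProduct_smul, mul_comm, mul_left_comm] using hfO _ hmem
  · simpa [hf] using hfO v (by simpa using smul_mem_sameSignCone (v := v) one_pos)
  · exact fun l hl => by simpa [hf] using hfL l hl

end SameSignCone

def dependences {ι E : Type*} [Fintype ι] [AddCommGroup E] [Module ℝ E] (u : ι → E) :
    Submodule ℝ (ι → ℝ) :=
  LinearMap.ker (Fintype.linearCombination ℝ u)

section Dependences

variable {ι E : Type*} [Fintype ι] [AddCommGroup E] [Module ℝ E] {u : ι → E}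

theorem mem_dependences {d : ι → ℝ} : d ∈ dependences u ↔ ∑ i, d i • u i = 0 := Iff.rfl

theorem linearIndependent_iff_dependences {D : Set ι} :
    LinearIndependent ℝ (fun i : D => u i) ↔
      ∀ d ∈ dependences u, Function.support d ⊆ D → d = 0 := by
  rw [linearIndependent_set_coe_iff, linearIndepOn_iff]
  let φ := Finsupp.linearEquivFunOnFinite ℝ ℝ ι
  constructor
  · intro h d hd hsupp
    have := h (φ.symm d) (by simpa [φ, Finsupp.mem_supported, ← Finsupp.fun_support_eq] using hsupp)
      (by rwa [Finsupp.linearCombination_eq_fintype_linearCombination_apply])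
    simpa using congrArg φ this
  · intro h l hl hl0
    have := h (φ l) (by
      rwa [mem_dependences, ← Fintype.linearCombination_apply,
        ← Finsupp.linearCombination_eq_fintype_linearCombination_apply, φ.symm_apply_apply])
      (by simpa [φ, Finsupp.mem_supported, ← Finsupp.fun_support_eq] using hl)
    simpa using congrArg φ.symm this

end Dependences

section Circuits

variable {n m : ℕ} {u : Fin m → Euc n} {c d : Fin m → ℝ}

theorem isCircuitVector_iff : IsCircuitVector u c ↔
    c ∈ dependences u ∧ c ≠ 0 ∧
      ∀ d ∈ dependences u, Function.support d ⊂ Function.support c → d = 0 := by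
  simp only [IsCircuitVector, IsCircuit, linearIndependent_iff_dependences]
  refine and_congr_right fun hc => ⟨fun ⟨hdep, hmin⟩ => ⟨?_, ?_⟩, fun ⟨hc0, hmin⟩ => ⟨?_, ?_⟩⟩
  · rintro rfl
    exact hdep fun d _ hd => Function.support_eq_empty_iff.1 (by simpa using hd)
  · exact fun d hd hdc => hmin _ hdc d hd subset_rfl
  · exact fun h => hc0 (h c hc subset_rfl)
  · exact fun D hD d hd hdD => hmin d hd (hdD.trans_ssubset hD)

namespace IsCircuitVector

theorem mem_dependences (hc : IsCircuitVector u c) : c ∈ dependences u := hc.1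

theorem ne_zero (hc : IsCircuitVector u c) : c ≠ 0 := (isCircuitVector_iff.1 hc).2.1

theorem eq_zero_of_support_ssubset (hc : IsCircuitVector u c) (hd : d ∈ dependences u)
    (hdc : Function.support d ⊂ Function.support c) : d = 0 :=
  (isCircuitVector_iff.1 hc).2.2 d hd hdc

theorem exists_eq_smul (hc : IsCircuitVector u c) (hd : d ∈ dependences u)
    (hdc : Function.support d ⊆ Function.support c) : ∃ r : ℝ, d = r • c := by
  obtain ⟨j, hj⟩ := Function.ne_iff.1 hc.ne_zero
  refine ⟨d j / c j, sub_eq_zero.1 (hc.eq_zero_of_support_ssubset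
    (sub_mem hd (Submodule.smul_mem _ _ hc.mem_dependences)) ⟨fun i hi => ?_, fun h => ?_⟩)⟩
  · by_contra hci
    have hdi : d i = 0 := by_contra fun h => hci (hdc h)
    simp [Function.mem_support.not.1 hci, hdi] at hi
  · exact h hj (by simp [div_mul_cancel₀ _ hj])

end IsCircuitVector

theorem exists_isCircuitVector_conforms (hd : d ∈ dependences u) (hd0 : d ≠ 0) :
    ∃ c, IsCircuitVector u c ∧ Conforms c d := by
  induction h : (Function.support d).ncard using Nat.strong_induction_on generalizing d with
  | _ N ih =>
  by_cases hmin : ∀ f ∈ dependences u, Function.support f ⊂ Function.support d → f = 0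
  · exact ⟨d, isCircuitVector_iff.2 ⟨hd, hd0, hmin⟩, Conforms.refl d⟩
  push Not at hmin
  obtain ⟨f, hf, hfd, hf0⟩ := hmin
  obtain ⟨i, hi⟩ := Function.ne_iff.1 hf0
  obtain ⟨g, hg, hgd, hpos⟩ : ∃ g ∈ dependences u,
      Function.support g ⊂ Function.support d ∧ ∃ i, 0 < g i * d i := by
    rcases (mul_ne_zero hi (hfd.subset hi)).lt_or_gt with hneg | hpos
    · exact ⟨-f, neg_mem hf, by rwa [Function.support_neg], i, by simpa using hneg⟩
    · exact ⟨f, hf, hfd, i, hpos⟩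
  obtain ⟨t, -, hconf, i₁, hi₁, hi₁'⟩ := exists_sub_smul_conforms
    (fun k hk => Function.notMem_support.1 fun h => hgd.subset h hk) (by simpa [mul_comm] using hpos)
  obtain ⟨j, hjd, hjg⟩ := Set.exists_of_ssubset hgd
  obtain ⟨c, hc, hcd⟩ := ih _ (h ▸ hconf.ncard_support_lt hi₁ hi₁')
    (sub_mem hd (Submodule.smul_mem _ _ hg))
    (Function.ne_iff.2 ⟨j, by simpa [Function.notMem_support.1 hjg] using hjd⟩) rfl
  exact ⟨c, hc, hcd.trans hconf⟩

theorem mem_hull_isCircuitVector_conforms (hd : d ∈ dependences u) :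
    d ∈ PointedCone.hull ℝ {c | IsCircuitVector u c ∧ Conforms c d} := by
  induction h : (Function.support d).ncard using Nat.strong_induction_on generalizing d with
  | _ N ih =>
  rcases eq_or_ne d 0 with rfl | hd0
  · exact zero_mem _
  obtain ⟨c, hc, hcd⟩ := exists_isCircuitVector_conforms hd hd0
  obtain ⟨i, hi⟩ := Function.ne_iff.1 hc.ne_zero
  obtain ⟨t, ht, hconf, i₁, hi₁, hi₁'⟩ := exists_sub_smul_conforms (e := d) (f := c)
    (fun i hi => Function.notMem_support.1 fun h => Function.mem_support.1
      (hcd.support_subset h) hi) ⟨i, hcd i hi⟩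
  have hrest := ih _ (h ▸ hconf.ncard_support_lt hi₁ hi₁')
    (sub_mem hd (Submodule.smul_mem _ _ hc.mem_dependences)) rfl
  have hmono : PointedCone.hull ℝ {e | IsCircuitVector u e ∧ Conforms e (d - t • c)} ≤
      PointedCone.hull ℝ {e | IsCircuitVector u e ∧ Conforms e d} :=
    Submodule.span_mono fun e ⟨he, hed⟩ => ⟨he, hed.trans hconf⟩
  simpa using add_mem (hmono hrest)
    (PointedCone.smul_mem _ ht.le (PointedCone.subset_hull ⟨hc, hcd⟩))

end Circuits

section InnerProducts

open RealInnerProductSpace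

variable {n m : ℕ} {u : Fin m → Euc n}

theorem dotm_eq_dotProduct (c a : Fin m → ℝ) : dotm c a = c ⬝ᵥ a := rfl

theorem dotm_inner (d : Fin m → ℝ) (y : Euc n) :
    dotm d (fun i => ⟪u i, y⟫) = ⟪∑ i, d i • u i, y⟫ := by
  simp [dotm, sum_inner, real_inner_smul_left]

theorem mem_dependences_iff_forall_dotm_inner {d : Fin m → ℝ} :
    d ∈ dependences u ↔ ∀ y, dotm d (fun i => ⟪u i, y⟫) = 0 := by
  simp only [dotm_inner, mem_dependences]
  exact ⟨fun h y => by simp [h], fun h => inner_self_eq_zero.1 (h _)⟩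

theorem dotm_inner_sub {d : Fin m → ℝ} (hd : d ∈ dependences u) (a : Fin m → ℝ) (y : Euc n) :
    dotm d (fun i => ⟪u i, y⟫ - a i) = -dotm d a := by
  have := mem_dependences_iff_forall_dotm_inner.1 hd y
  simp only [dotm, mul_sub, Finset.sum_sub_distrib] at this ⊢
  linarith

theorem exists_inner_eq_of_forall_dotm_eq_zero {D : Set (Fin m)} {β : Fin m → ℝ}
    (h : ∀ d ∈ dependences u, Function.support d ⊆ D → dotm d β = 0) :
    ∃ y : Euc n, ∀ i ∈ D, ⟪u i, y⟫ = β i := by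
  classical
  let T : Euc n →ₗ[ℝ] EuclideanSpace ℝ (Fin m) :=
    { toFun y := WithLp.toLp 2 (D.indicator fun i => ⟪u i, y⟫)
      map_add' y z := by ext i; by_cases hi : i ∈ D <;> simp [hi, inner_add_right]
      map_smul' r y := by ext i; by_cases hi : i ∈ D <;> simp [hi, inner_smul_right] }
  have hT (y : Euc n) (z : EuclideanSpace ℝ (Fin m)) :
      ⟪T y, z⟫ = dotm (D.indicator z) (fun i => ⟪u i, y⟫) := by
    simp only [T, LinearMap.coe_mk, AddHom.coe_mk, PiLp.inner_apply, dotm]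
    refine Finset.sum_congr rfl fun i _ => ?_
    by_cases hi : i ∈ D <;> simp [hi, mul_comm]
  have hmem : WithLp.toLp 2 (D.indicator β) ∈ LinearMap.range T := by
    rw [← (LinearMap.range T).orthogonal_orthogonal]
    intro z hz
    have hdep : D.indicator z ∈ dependences u :=
      mem_dependences_iff_forall_dotm_inner.2 fun y => by
        rw [← hT]; exact (Submodule.mem_orthogonal _ _).1 hz _ ⟨y, rfl⟩
    have := h _ hdep Set.support_indicator_subset
    simp only [PiLp.inner_apply, dotm] at this ⊢
    rw [← this]
    refine Finset.sum_congr rfl fun i _ => ?_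
    by_cases hi : i ∈ D <;> simp [hi, mul_comm]
  obtain ⟨y, hy⟩ := hmem
  refine ⟨y, fun i hi => ?_⟩
  simpa [T, hi] using congrArg (fun z => z i) hy

theorem exists_sum_smul_eq_of_forall_inner_eq_zero {Z : Set (Fin m)} {g : Euc n}
    (h : ∀ p : Euc n, (∀ i ∈ Z, ⟪u i, p⟫ = 0) → ⟪g, p⟫ = 0) :
    ∃ γ : Fin m → ℝ, Function.support γ ⊆ Z ∧ ∑ i, γ i • u i = g := by
  have hg : g ∈ Submodule.span ℝ (u '' Z) := by
    rw [← (Submodule.span ℝ (u '' Z)).orthogonal_orthogonal]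
    intro p hp
    rw [real_inner_comm]
    exact h p fun i hi => (Submodule.mem_orthogonal _ _).1 hp _ (Submodule.subset_span ⟨i, hi, rfl⟩)
  obtain ⟨l, hl, rfl⟩ := Finsupp.mem_span_image_iff_linearCombination ℝ |>.1 hg
  refine ⟨l, by simpa [Finsupp.mem_supported, ← Finsupp.fun_support_eq] using hl, ?_⟩
  rw [Finsupp.linearCombination_apply, Finsupp.sum_fintype _ _ (by simp)]

end InnerProducts

section SignSets

open RealInnerProductSpace

variable {n m : ℕ} {u : Fin m → Euc n} {a b c : Fin m → ℝ}

namespace IsCircuitVector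

theorem exists_inner_eq (hc : IsCircuitVector u c) {β : Fin m → ℝ} (hβ : dotm c β = 0) :
    ∃ y : Euc n, ∀ i ∈ Function.support c, ⟪u i, y⟫ = β i :=
  exists_inner_eq_of_forall_dotm_eq_zero fun d hd hdc => by
    obtain ⟨r, rfl⟩ := hc.exists_eq_smul hd hdc
    simp [dotm, mul_assoc, ← Finset.mul_sum, show ∑ i, c i * β i = 0 from hβ]

theorem sign_dotm_eq_of_signSet_subset (hc : IsCircuitVector u c)
    (h : signSet u b ⊆ signSet u a) : SignType.sign (dotm c b) = SignType.sign (dotm c a) := by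
  have hcc : 0 < dotm c c := lt_of_le_of_ne (Finset.sum_nonneg fun i _ => mul_self_nonneg (c i))
    (Ne.symm (dotProduct_self_eq_zero.not.2 hc.ne_zero))
  set r := dotm c b / dotm c c
  have hr : r * dotm c c = dotm c b := div_mul_cancel₀ _ hcc.ne'
  obtain ⟨y, hy⟩ := hc.exists_inner_eq (β := b - r • c) (by
    show c ⬝ᵥ (b - r • c) = 0
    rw [dotProduct_sub, dotProduct_smul, smul_eq_mul]
    exact sub_eq_zero.2 hr.symm)
  obtain ⟨y', hy'⟩ := h ⟨y, fun i => rfl⟩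
  dsimp only at hy'
  have hsum : SignType.sign (dotm c fun i => ⟪u i, y'⟫ - a i) = SignType.sign (-r) := by
    refine sign_sum_mul_eq hc.ne_zero fun i hi => ?_
    rw [sign_mul, ← hy' i, hy i hi, ← sign_mul]
    simp only [Pi.sub_apply, Pi.smul_apply, smul_eq_mul, sub_sub_cancel_left]
    rw [show c i * -(r * c i) = -r * (c i * c i) by ring, sign_mul, sign_pos (mul_self_pos.2 hi),
      mul_one]
  rw [dotm_inner_sub hc.mem_dependences, Left.sign_neg, Left.sign_neg, neg_inj] at hsum
  rw [hsum, ← hr, sign_mul, sign_pos hcc, mul_one]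

end IsCircuitVector

end SignSets

section Realizability

open RealInnerProductSpace

variable {n m : ℕ} {u : Fin m → Euc n}

theorem exists_separating_of_notMem_signSet {a v : Fin m → ℝ}
    (hv : (fun i => SignType.sign (v i)) ∉ signSet u a) :
    ∃ (w : Fin m → ℝ) (s : ℝ), 0 ≤ s ∧ (∀ i, w i * v i ≤ 0) ∧ w ⬝ᵥ v < s ∧
      ∀ y : Euc n, (∀ i, v i = 0 → ⟪u i, y⟫ = a i) → s ≤ w ⬝ᵥ fun i => ⟪u i, y⟫ - a i := by
  set L := (fun y : Euc n => fun i => ⟪u i, y⟫ - a i) '' {y | ∀ i, v i = 0 → ⟪u i, y⟫ = a i}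
  have hLc : Convex ℝ L := by
    rintro _ ⟨y, hy, rfl⟩ _ ⟨y', hy', rfl⟩ α β - - hαβ
    refine ⟨α • y + β • y', fun i hi => ?_, funext fun i => ?_⟩
    · simp only [inner_add_right, inner_smul_right, hy i hi, hy' i hi]
      linear_combination a i * hαβ
    · simp only [inner_add_right, inner_smul_right, Pi.add_apply, Pi.smul_apply, smul_eq_mul]
      linear_combination a i * hαβ
  have hL : Disjoint (sameSignCone v) L := by
    refine Set.disjoint_left.2 ?_
    rintro _ hz ⟨y, hy, rfl⟩
    refine hv ⟨y, fun i => ?_⟩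
    by_cases hi : v i = 0
    · simp [hi, hy i hi]
    · exact sign_eq_sign_of_mul_pos (hz i hi)
  obtain ⟨w, s, hs, hwv, hwvs, hwL⟩ := exists_dotProduct_separating hLc hL
  exact ⟨w, s, hs, hwv, hwvs, fun y hy => hwL _ ⟨y, hy, rfl⟩⟩

/-- Motzkin's transposition theorem for the system `sign (⟪u i, y⟫ - a i) = sign (v i)`, once its
equations are solvable. -/
theorem exists_dependence_of_notMem_signSet {a v : Fin m → ℝ} {y₀ : Euc n}
    (hy₀ : ∀ i, v i = 0 → ⟪u i, y₀⟫ = a i) (hv : (fun i => SignType.sign (v i)) ∉ signSet u a) :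
    ∃ d ∈ dependences u, (∀ i, 0 ≤ d i * v i) ∧ 0 ≤ dotm d a ∧ 0 < dotm d a + dotm d v := by
  obtain ⟨w, s, hs, hwv, hwvs, hwE⟩ := exists_separating_of_notMem_signSet hv
  have hws := hwE y₀ hy₀
  obtain ⟨γ, hγZ, hγ⟩ := exists_sum_smul_eq_of_forall_inner_eq_zero (u := u) (Z := {i | v i = 0})
    (g := ∑ i, w i • u i) fun p hp => by
      refine eq_zero_of_forall_le_add_mul (p := w ⬝ᵥ fun i => ⟪u i, y₀⟫ - a i) (r := s) fun t => ?_
      convert hwE (y₀ + t • p) (fun i hi => by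
        simp [inner_add_right, inner_smul_right, hy₀ i hi, hp i hi]) using 1
      simp only [← dotm_inner, dotm, dotProduct, inner_add_right, inner_smul_right]
      rw [Finset.mul_sum, ← Finset.sum_add_distrib]
      exact Finset.sum_congr rfl fun i _ => by ring
  have hγv (i : Fin m) : γ i * v i = 0 := by
    by_cases hi : γ i = 0
    · simp [hi]
    · simp [show v i = 0 from hγZ hi]
  have hγa : dotm γ a = dotm w fun i => ⟪u i, y₀⟫ := by
    rw [dotm_inner, ← hγ, ← dotm_inner]
    refine Finset.sum_congr rfl fun i _ => ?_
    by_cases hi : γ i = 0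
    · simp [hi]
    · exact congrArg _ (hy₀ i (hγZ hi)).symm
  have hda : dotm (γ - w) a = w ⬝ᵥ fun i => ⟪u i, y₀⟫ - a i := by
    rw [dotm_eq_dotProduct, sub_dotProduct, ← dotm_eq_dotProduct, hγa]
    exact (dotProduct_sub w (fun i => ⟪u i, y₀⟫) a).symm
  have hdv : dotm (γ - w) v = -(w ⬝ᵥ v) := by
    rw [dotm_eq_dotProduct, sub_dotProduct, show γ ⬝ᵥ v = 0 from Finset.sum_eq_zero fun i _ => hγv i,
      zero_sub]
  refine ⟨γ - w, ?_, fun i => ?_, by linarith, by linarith⟩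
  · rw [mem_dependences]
    simp only [Pi.sub_apply, sub_smul, Finset.sum_sub_distrib, hγ, sub_self]
  · simp only [Pi.sub_apply, sub_mul, hγv i]
    linarith [hwv i]

end Realizability

section OpenFaces

open RealInnerProductSpace

variable {n m : ℕ} {u : Fin m → Euc n} {a a' b : Fin m → ℝ}

namespace SameOpenFace

theorem refl (u : Fin m → Euc n) (a : Fin m → ℝ) : SameOpenFace u a a := fun _ _ => rfl

theorem symm (h : SameOpenFace u a b) : SameOpenFace u b a := fun c hc => (h c hc).symm

theorem trans (hab : SameOpenFace u a b) (hba' : SameOpenFace u b a') : SameOpenFace u a a' :=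
  fun c hc => (hab c hc).trans (hba' c hc)

/-- Agreement of `sign (dotm e a)` with `sign (dotm e b)`, together with `dotm e b ≤ 0`, is stable
under nonnegative combinations of `e`, so it passes from the circuit vectors conformal to `d` to `d`.
-/
theorem sign_dotm_eq_of_mem_dependences (hab : SameOpenFace u a b) {d : Fin m → ℝ}
    (hd : d ∈ dependences u) (hb : ∀ c, IsCircuitVector u c → Conforms c d → dotm c b ≤ 0) :
    SignType.sign (dotm d a) = SignType.sign (dotm d b) ∧ dotm d b ≤ 0 := by
  refine Submodule.span_induction
    (p := fun e _ => SignType.sign (dotm e a) = SignType.sign (dotm e b) ∧ dotm e b ≤ 0)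
    (fun c hc => ⟨hab c hc.1, hb c hc.1 hc.2⟩) (by simp [dotm]) (fun e e' _ _ he he' => ?_)
    (fun t e _ he => ?_) (mem_hull_isCircuitVector_conforms hd)
  · simp only [dotm_eq_dotProduct, add_dotProduct] at he he' ⊢
    exact ⟨sign_add_eq_sign_add he.2 he'.2 he.1 he'.1, add_nonpos he.2 he'.2⟩
  · obtain ⟨t, ht⟩ := t
    simp only [dotm_eq_dotProduct, smul_dotProduct, Nonneg.mk_smul, smul_eq_mul, sign_mul] at he ⊢
    exact ⟨by rw [he.1], mul_nonpos_of_nonneg_of_nonpos ht he.2⟩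

theorem signSet_subset (hab : SameOpenFace u b a) : signSet u b ⊆ signSet u a := by
  rintro s ⟨x, hx⟩
  set v : Fin m → ℝ := fun i => ⟪u i, x⟫ - b i
  have hdv : ∀ d ∈ dependences u, dotm d v = -dotm d b := fun d hd => dotm_inner_sub hd b x
  have key : ∀ d ∈ dependences u, (∀ i, 0 ≤ d i * v i) →
      SignType.sign (dotm d a) = SignType.sign (dotm d b) ∧ dotm d b ≤ 0 :=
    fun d hd hd_v => hab.symm.sign_dotm_eq_of_mem_dependences hd fun c hc hcd => by
      have hcv : 0 ≤ dotm c v := Finset.sum_nonneg fun i _ => hcd.mul_nonneg hd_v i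
      linarith [hdv c hc.mem_dependences]
  obtain ⟨y₀, hy₀⟩ := exists_inner_eq_of_forall_dotm_eq_zero (u := u) (D := {i | v i = 0})
    (β := a) fun d hd hdD => by
      have hd_v (i : Fin m) : d i * v i = 0 := by
        by_cases hi : d i = 0
        · simp [hi]
        · simp [show v i = 0 from hdD hi]
      have hdb : dotm d b = 0 := by
        rw [← neg_eq_zero, ← hdv d hd]; exact Finset.sum_eq_zero fun i _ => hd_v i
      have := (key d hd fun i => (hd_v i).ge).1
      rwa [hdb, sign_zero, sign_eq_zero_iff] at this
  by_contra hsa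
  rw [show s = fun i => SignType.sign (v i) from funext hx] at hsa
  obtain ⟨d, hd, hd_v, hda, hdav⟩ := exists_dependence_of_notMem_signSet hy₀ hsa
  obtain ⟨hsign, hdb⟩ := key d hd hd_v
  rcases hdb.lt_or_eq with hdb | hdb
  · rw [sign_neg hdb, sign_eq_neg_one_iff] at hsign
    linarith
  · rw [hdb, sign_zero, sign_eq_zero_iff] at hsign
    linarith [hdv d hd]

end SameOpenFace

theorem signSet_subset_iff : signSet u b ⊆ signSet u a ↔ SameOpenFace u b a :=
  ⟨fun h _ hc => hc.sign_dotm_eq_of_signSet_subset h, SameOpenFace.signSet_subset⟩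

theorem mem_faceOp_signOp {S : Set (Fin m → ℝ)} :
    a ∈ FaceOp u (SignOp u S) ↔ ∀ b ∈ S, SameOpenFace u b a := by
  simp only [FaceOp, SignOp, Set.mem_ofPred_eq, Set.iUnion₂_subset_iff, signSet_subset_iff]

end OpenFaces

theorem faceOp_signOp_eq_iff_openFace_general {n m : ℕ}
    (u : Fin m → Euc n)
    (S : Set (Fin m → ℝ)) (hS : S.Nonempty) :
    FaceOp u (SignOp u S) = S ↔
      ∃ a : Fin m → ℝ, S = {b | SameOpenFace u b a} := by
  constructor
  · intro hface
    obtain ⟨a, ha⟩ := hS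
    have hSa : ∀ b ∈ S, SameOpenFace u b a :=
      fun b hb => (mem_faceOp_signOp.1 (hface.symm ▸ hb) a ha).symm
    refine ⟨a, Set.ext fun b => ⟨hSa b, fun hb => ?_⟩⟩
    rw [← hface]
    exact mem_faceOp_signOp.2 fun b' hb' => (hSa b' hb').trans hb.symm
  · rintro ⟨a, rfl⟩
    ext x
    simp only [mem_faceOp_signOp, Set.mem_ofPred_eq]
    exact ⟨fun h => (h a (.refl u a)).symm, fun hx b hb => hb.trans hx.symm⟩

theorem faceOp_signOp_eq_iff_openFace {n m : ℕ} (hn : 1 ≤ n) (hm : 1 ≤ m)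
    (u : Fin m → Euc n) (hu : ∀ i, u i ≠ 0)
    (S : Set (Fin m → ℝ)) (hS : S.Nonempty) :
    FaceOp u (SignOp u S) = S ↔
      ∃ a : Fin m → ℝ, S = {b | SameOpenFace u b a} :=
  faceOp_signOp_eq_iff_openFace_general u S hS
end
end
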